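/- arXiv:2106.15750 — 3 statements merged into one kernel-verified Lean document; each statement's English description precedes it below -/
import Mathlib

section
/- Let G = A *_C B be an amalgamated free product of groups, given by injective homomorphisms C → A and C → B whose images are proper subgroups of A and of B respectively. If N is a subgroup of (the canonical image of) A which is subnormal in G, then N is conjugate in G to a subgroup of the image of C; that is, there exists g ∈ G with gNg⁻¹ contained in the image of C. -/
/-!
View `A *_C B` as the pushout over `Bool` of the two edge maps, where reduced words give normal
forms. If `g ∉ A` conjugates some `x ∈ A` back into `A`, write `g = a v` with `a ∈ A` and `v` a
reduced word whose first letter lies outside `A`. Were `y = a⁻¹ x a ∈ A ∖ C`, the element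
`g⁻¹ x g = v⁻¹ y v` would be a reduced word of length at least three, which cannot lie in `A`.
Hence, if no conjugate of `N` lies in `C`, any element conjugating `N` into `A` lies in `A`; climbing
a subnormal series from `N`, each term conjugates `N` into the previous one, so every term lies in
`A`. Then `A` is everything, so `B = A ∩ B = C`, contradicting properness of `C` in `B`.
-/

/-- A subgroup `N` of `G` is subnormal if there is a finite chain
`N = N₀ ≤ N₁ ≤ ⋯ ≤ N_k = G` with each `N_i` normal in `N_{i+1}`. -/
def IsSubnormal {G : Type*} [Group G] (N : Subgroup G) : Prop :=
  ∃ (k : ℕ) (s : ℕ → Subgroup G), s 0 = N ∧ s k = ⊤ ∧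
    ∀ i < k, s i ≤ s (i + 1) ∧ ((s i).subgroupOf (s (i + 1))).Normal

/-- The amalgamated free product `A *_C B` of two group homomorphisms
`f : C → A` and `g : C → B`: the quotient of the free product `A * B` by the
normal closure of the relations `f(c) = g(c)` for `c ∈ C`. -/
def AmalgamatedProduct {A B C : Type*} [Group A] [Group B] [Group C]
    (f : C →* A) (g : C →* B) : Type _ :=
  Monoid.Coprod A B ⧸ Subgroup.normalClosure
    {x | ∃ c : C, x = Monoid.Coprod.inl (f c) * (Monoid.Coprod.inr (g c))⁻¹}

instance {A B C : Type*} [Group A] [Group B] [Group C] (f : C →* A) (g : C →* B) :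
    Group (AmalgamatedProduct f g) := by
  unfold AmalgamatedProduct; infer_instance

/-- The canonical homomorphism `A → A *_C B`. -/
def AmalgamatedProduct.inl {A B C : Type*} [Group A] [Group B] [Group C]
    (f : C →* A) (g : C →* B) : A →* AmalgamatedProduct f g :=
  (QuotientGroup.mk' _).comp Monoid.Coprod.inl

theorem IsSubnormal.isSubnormal {G : Type*} [Group G] {N : Subgroup G} (h : IsSubnormal N) :
    N.IsSubnormal := by
  obtain ⟨k, s, rfl, hk, hs⟩ := h
  induction k generalizing s with
  | zero => exact hk ▸ .top
  | succ k ih =>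
    exact .step _ _ (hs 0 k.succ_pos).1
      (ih (fun n => s (n + 1)) hk fun i hi => hs (i + 1) (by omega)) (hs 0 k.succ_pos).2

namespace Subgroup.IsSubnormal

variable {G : Type*} [Group G]

theorem eq_top_of_forall_conj_mem {N H K : Subgroup G} (hH : H.IsSubnormal) (hNH : N ≤ H)
    (hHK : H ≤ K) (hK : ∀ g : G, (∀ x ∈ N, g⁻¹ * x * g ∈ K) → g ∈ K) : K = ⊤ := by
  induction hH with
  | top => exact top_le_iff.mp hHK
  | step H L hHL _ hHnormal ih =>
    refine ih (hNH.trans hHL) fun g hg => hK g fun x hx => hHK ?_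
    simpa using (normal_subgroupOf_iff hHL).mp hHnormal x g⁻¹ (hNH hx) (inv_mem hg)

end Subgroup.IsSubnormal

namespace Monoid.PushoutI

open CoprodI Function

variable {ι : Type*} {G : ι → Type*} [∀ i, Group (G i)] {H : Type*} [Group H]
  {φ : ∀ i, H →* G i}

theorem NormalWord.reduced {d : NormalWord.Transversal φ} (n : NormalWord d) :
    Reduced φ n.toWord := by
  rintro ⟨i, x⟩ hx hxφ
  have h := (d.compl i).equiv_fst_eq_self_of_mem_of_one_mem (d.one_mem i) hxφ
  rw [(d.compl i).equiv_fst_eq_one_of_mem_of_one_mem (one_mem _) (n.normalized i x hx)] at h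
  exact n.ne_one _ hx (congrArg Subtype.val h).symm

theorem reduced_neWord_singleton_iff {i : ι} {x : G i} (hx : x ≠ 1) :
    Reduced φ (NeWord.singleton x hx).toWord ↔ x ∉ (φ i).range := by
  simp [Reduced, NeWord.toWord]

theorem reduced_neWord_append_iff {i j k l : ι} {w₁ : NeWord G i j} {w₂ : NeWord G k l}
    (hjk : j ≠ k) :
    Reduced φ (w₁.append hjk w₂).toWord ↔ Reduced φ w₁.toWord ∧ Reduced φ w₂.toWord := by
  simp only [Reduced, NeWord.toWord, NeWord.toList, List.mem_append, or_imp, forall_and]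

theorem Reduced.neWord_inv {i j : ι} {w : NeWord G i j} (hw : Reduced φ w.toWord) :
    Reduced φ w.inv.toWord := by
  induction w with
  | singleton x hx =>
    rw [reduced_neWord_singleton_iff] at hw
    rwa [NeWord.inv, reduced_neWord_singleton_iff, inv_mem_iff]
  | append w₁ hjk w₂ ih₁ ih₂ =>
    rw [reduced_neWord_append_iff] at hw
    rw [NeWord.inv, reduced_neWord_append_iff]
    exact ⟨ih₂ hw.2, ih₁ hw.1⟩

theorem Reduced.length_le_one_of_prod_mem_range (hφ : ∀ i, Injective (φ i)) {i : ι}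
    {w : Word G} (hw : Reduced φ w) (h : ofCoprodI w.prod ∈ (of (φ := φ) i).range) :
    w.toList.length ≤ 1 := by
  obtain ⟨x, hx⟩ := h
  by_cases hxφ : x ∈ (φ i).range
  · obtain ⟨c, rfl⟩ := hxφ
    rw [hw.eq_empty_of_mem_range hφ ⟨c, by rw [← hx, of_apply_eq_base]⟩]
    simp [Word.empty]
  · classical
    obtain ⟨d⟩ := NormalWord.transversal_nonempty φ hφ
    have hx1 : x ≠ 1 := fun h => hxφ (h ▸ one_mem _)
    let u := (NeWord.singleton x hx1).toWord
    have hu : Reduced φ u := (reduced_neWord_singleton_iff hx1).mpr hxφ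
    obtain ⟨n, hn, hnw⟩ := hw.exists_normalWord_prod_eq d
    obtain ⟨n', hn', hnu⟩ := hu.exists_normalWord_prod_eq d
    have hu_prod : ofCoprodI (φ := φ) u.prod = of i x := by
      rw [← NeWord.prod, NeWord.prod_singleton, ofCoprodI_of]
    have hnn' : n = n' := NormalWord.prod_injective (by rw [hn, hn', hu_prod, hx])
    have := congrArg List.length (hnw.symm.trans (hnn' ▸ hnu))
    simpa [u, NeWord.toWord] using this.le

theorem exists_eq_mul_reduced_of_notMem_range (hφ : ∀ i, Injective (φ i)) {i : ι}
    {g : PushoutI φ} (hg : g ∉ (of (φ := φ) i).range) :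
    ∃ a ∈ (of (φ := φ) i).range, ∃ (j k : ι) (v : NeWord G j k),
      j ≠ i ∧ Reduced φ v.toWord ∧ g = a * ofCoprodI v.prod := by
  classical
  obtain ⟨d⟩ := NormalWord.transversal_nonempty φ hφ
  let n := NormalWord.equiv (d := d) g
  let p := Word.equivPair i n.toWord
  have hred : Reduced φ p.tail := fun ⟨_, x⟩ hx =>
    n.reduced _ (Word.mem_of_mem_equivPair_tail x hx)
  have hgp : g = (base φ n.head * of i p.head) * ofCoprodI p.tail.prod := by
    rw [mul_assoc, ← ofCoprodI_of, ← map_mul, ← Word.prod_rcons, ← Word.equivPair_symm,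
      Equiv.symm_apply_apply]
    exact (NormalWord.equiv.symm_apply_apply g).symm
  have ha : base φ n.head * of i p.head ∈ (of (φ := φ) i).range :=
    mul_mem ⟨φ i n.head, of_apply_eq_base φ i n.head⟩ ⟨p.head, rfl⟩
  have hne : p.tail ≠ .empty := by
    intro h
    rw [h, Word.prod_empty, map_one, mul_one] at hgp
    exact hg (hgp ▸ ha)
  obtain ⟨j, k, v, hv⟩ := NeWord.of_word _ hne
  refine ⟨_, ha, j, k, v, ?_, hv ▸ hred, by rw [hgp, ← hv]; rfl⟩
  rintro rfl
  apply p.fstIdx_ne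
  simp [← hv, Word.fstIdx, NeWord.toWord]

theorem exists_conj_mem_base_range_of_conj_mem_range (hφ : ∀ i, Injective (φ i)) {i : ι}
    {g : PushoutI φ} (hg : g ∉ (of (φ := φ) i).range) :
    ∃ a : PushoutI φ, ∀ x ∈ (of (φ := φ) i).range,
      g⁻¹ * x * g ∈ (of (φ := φ) i).range → a⁻¹ * x * a ∈ (base φ).range := by
  obtain ⟨a, ha, j, k, v, hji, hv, rfl⟩ := exists_eq_mul_reduced_of_notMem_range hφ hg
  refine ⟨a, fun x hx hconj => ?_⟩
  obtain ⟨y, hy⟩ : a⁻¹ * x * a ∈ (of (φ := φ) i).range := mul_mem (mul_mem (inv_mem ha) hx) ha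
  by_contra hbase
  have hyφ : y ∉ (φ i).range := fun ⟨c, hc⟩ => hbase ⟨c, by rw [← hy, ← hc, of_apply_eq_base]⟩
  have hy1 : y ≠ 1 := fun h => hyφ (h ▸ one_mem _)
  let w := (v.inv.append hji (NeWord.singleton y hy1)).append hji.symm v
  have hw : Reduced φ w.toWord := by
    simp only [w, reduced_neWord_append_iff, reduced_neWord_singleton_iff]
    exact ⟨⟨hv.neWord_inv, hyφ⟩, hv⟩
  have hw_prod : ofCoprodI w.prod = (a * ofCoprodI v.prod)⁻¹ * x * (a * ofCoprodI v.prod) := by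
    simp only [w, NeWord.append_prod, NeWord.inv_prod, NeWord.prod_singleton, map_mul, map_inv,
      ofCoprodI_of, hy]
    group
  have hlen := hw.length_le_one_of_prod_mem_range hφ (hw_prod ▸ hconj)
  simp only [w, NeWord.toWord, NeWord.toList, List.length_append, List.length_singleton] at hlen
  have := List.length_pos_iff.mpr v.toList_ne_nil
  omega

theorem range_of_ne_top_of_not_surjective (hφ : ∀ i, Injective (φ i)) {i j : ι} (hji : j ≠ i)
    (hj : ¬Surjective (φ j)) : (of (φ := φ) i).range ≠ ⊤ := by
  intro htop
  apply hj
  intro b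
  have hb : of j b ∈ (base φ).range := by
    rw [← inf_of_range_eq_base_range hφ hji, htop, inf_top_eq]
    exact ⟨b, rfl⟩
  obtain ⟨c, hc⟩ := hb
  exact ⟨c, of_injective hφ j (by rw [of_apply_eq_base, hc])⟩

theorem exists_conj_le_base_range_of_isSubnormal (hφ : ∀ i, Injective (φ i)) {i j : ι}
    (hji : j ≠ i) (hj : ¬Surjective (φ j)) {N : Subgroup (PushoutI φ)}
    (hN : N ≤ (of (φ := φ) i).range) (hsub : N.IsSubnormal) :
    ∃ x : PushoutI φ, N.map (MulAut.conj x).toMonoidHom ≤ (base φ).range := by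
  by_contra! hconj
  refine range_of_ne_top_of_not_surjective hφ hji hj
    (hsub.eq_top_of_forall_conj_mem le_rfl hN fun g hg => ?_)
  by_contra hgi
  obtain ⟨a, ha⟩ := exists_conj_mem_base_range_of_conj_mem_range hφ hgi
  apply hconj a⁻¹
  rintro _ ⟨x, hx, rfl⟩
  simpa using ha x (hN hx) (hg x hx)

end Monoid.PushoutI

namespace AmalgamatedProduct

open Monoid PushoutI Function

universe uA uB uC

variable {A : Type uA} {B : Type uB} {C : Type uC} [Group A] [Group B] [Group C]

def inr (f : C →* A) (g : C →* B) : B →* AmalgamatedProduct f g :=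
  (QuotientGroup.mk' _).comp Monoid.Coprod.inr

theorem inl_comp_eq_inr_comp (f : C →* A) (g : C →* B) :
    (inl f g).comp f = (inr f g).comp g := by
  ext c
  exact QuotientGroup.eq_iff_div_mem.mpr
    (Subgroup.subset_normalClosure ⟨c, div_eq_mul_inv _ _⟩)

/-- The vertex groups of `A *_C B` as a `Bool`-indexed family (`true ↦ A`, `false ↦ B`), lifted
to a common universe. -/
def Vertex (A : Type uA) (B : Type uB) (b : Bool) : Type (max uA uB) :=
  cond b (ULift.{uB} A) (ULift.{uA} B)

instance (b : Bool) : Group (Vertex A B b) := by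
  cases b <;> exact ULift.group

def edgeMap (f : C →* A) (g : C →* B) : ∀ b, C →* Vertex A B b
  | true => MulEquiv.ulift.symm.toMonoidHom.comp f
  | false => MulEquiv.ulift.symm.toMonoidHom.comp g

theorem edgeMap_injective {f : C →* A} {g : C →* B} (hf : Injective f) (hg : Injective g) :
    ∀ b, Injective (edgeMap f g b)
  | true => MulEquiv.ulift.symm.injective.comp hf
  | false => MulEquiv.ulift.symm.injective.comp hg

theorem edgeMap_false_not_surjective {f : C →* A} {g : C →* B} (hg : g.range ≠ ⊤) :
    ¬Surjective (edgeMap f g false) := fun h =>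
  hg <| MonoidHom.range_eq_top.mpr fun b =>
    let ⟨c, hc⟩ := h (ULift.up b)
    ⟨c, congrArg ULift.down hc⟩

def toPushoutI (f : C →* A) (g : C →* B) : AmalgamatedProduct f g →* PushoutI (edgeMap f g) :=
  QuotientGroup.lift _
    (Coprod.lift ((of true).comp MulEquiv.ulift.symm.toMonoidHom)
      ((of false).comp MulEquiv.ulift.symm.toMonoidHom))
    (Subgroup.normalClosure_le_normal <| by
      rintro _ ⟨c, rfl⟩
      simp only [SetLike.mem_coe, MonoidHom.mem_ker, map_mul, map_inv, Coprod.lift_apply_inl,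
        Coprod.lift_apply_inr, MonoidHom.comp_apply, mul_inv_eq_one]
      exact (of_apply_eq_base (edgeMap f g) true c).trans
        (of_apply_eq_base (edgeMap f g) false c).symm)

def ofPushoutI (f : C →* A) (g : C →* B) : PushoutI (edgeMap f g) →* AmalgamatedProduct f g :=
  PushoutI.lift
    (fun | true => (inl f g).comp MulEquiv.ulift.toMonoidHom
         | false => (inr f g).comp MulEquiv.ulift.toMonoidHom)
    ((inl f g).comp f)
    (fun | true => rfl | false => (inl_comp_eq_inr_comp f g).symm)

def equivPushoutI (f : C →* A) (g : C →* B) : AmalgamatedProduct f g ≃* PushoutI (edgeMap f g) :=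
  MonoidHom.toMulEquiv (toPushoutI f g) (ofPushoutI f g)
    (QuotientGroup.monoidHom_ext _ <| Coprod.hom_ext (by ext; rfl) (by ext; rfl))
    (hom_ext_nonempty fun | true => by ext; rfl | false => by ext; rfl)

theorem equivPushoutI_inl_mem_range_of (f : C →* A) (g : C →* B) (a : A) :
    equivPushoutI f g (inl f g a) ∈ (of (φ := edgeMap f g) true).range :=
  ⟨ULift.up a, rfl⟩

theorem equivPushoutI_inl_apply (f : C →* A) (g : C →* B) (c : C) :
    equivPushoutI f g (inl f g (f c)) = base (edgeMap f g) c :=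
  of_apply_eq_base (edgeMap f g) true c

end AmalgamatedProduct

theorem subnormal_subgroup_of_vertex_conjugate_into_edge_group_general
    {A B C : Type*} [Group A] [Group B] [Group C]
    (f : C →* A) (g : C →* B)
    (hf : Function.Injective f) (hg : Function.Injective g)
    (hgp : g.range ≠ ⊤)
    (N : Subgroup (AmalgamatedProduct f g))
    (hNA : N ≤ (AmalgamatedProduct.inl f g).range)
    (hsub : IsSubnormal N) :
    ∃ x : AmalgamatedProduct f g,
      N.map (MulAut.conj x).toMonoidHom ≤ ((AmalgamatedProduct.inl f g).comp f).range := by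
  let e := AmalgamatedProduct.equivPushoutI f g
  have hNA' : N.map e.toMonoidHom ≤ (Monoid.PushoutI.of true).range := by
    rintro _ ⟨n, hn, rfl⟩
    obtain ⟨a, rfl⟩ := hNA hn
    exact AmalgamatedProduct.equivPushoutI_inl_mem_range_of f g a
  obtain ⟨x, hx⟩ := Monoid.PushoutI.exists_conj_le_base_range_of_isSubnormal
    (AmalgamatedProduct.edgeMap_injective hf hg) Bool.false_ne_true
    (AmalgamatedProduct.edgeMap_false_not_surjective hgp) hNA'
    (hsub.isSubnormal.map e.surjective)
  refine ⟨e.symm x, ?_⟩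
  rintro _ ⟨n, hn, rfl⟩
  obtain ⟨c, hc⟩ := hx ⟨e n, ⟨n, hn, rfl⟩, rfl⟩
  refine ⟨c, e.injective ?_⟩
  simpa [AmalgamatedProduct.equivPushoutI_inl_apply, e] using hc

/-- **Elkalla's Lemma 2.4, amalgam case.** Let `G = A *_C B` be an amalgamated
free product along injective homomorphisms `f : C → A` and `g : C → B` with
proper images. If `N` is a subgroup of the canonical image of `A` which is
subnormal in `G`, then some conjugate of `N` lies in the image of `C`. -/
theorem subnormal_subgroup_of_vertex_conjugate_into_edge_group
    {A B C : Type*} [Group A] [Group B] [Group C]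
    (f : C →* A) (g : C →* B)
    (hf : Function.Injective f) (hg : Function.Injective g)
    (hfp : f.range ≠ ⊤) (hgp : g.range ≠ ⊤)
    (N : Subgroup (AmalgamatedProduct f g))
    (hNA : N ≤ (AmalgamatedProduct.inl f g).range)
    (hsub : IsSubnormal N) :
    ∃ x : AmalgamatedProduct f g,
      N.map (MulAut.conj x).toMonoidHom ≤ ((AmalgamatedProduct.inl f g).comp f).range :=
  subnormal_subgroup_of_vertex_conjugate_into_edge_group_general f g hf hg hgp N hNA hsub
end

section
/- Let G be the HNN extension of a group A with associated subgroups C and C' (given by an isomorphism φ : C → C' between subgroups of A, with stable letter t satisfying t c t⁻¹ = φ(c) for all c ∈ C). If N is a subgroup of (the canonical image of) A which is subnormal in G, then N is conjugate in G to a subgroup of the image of C. -/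
theorem List.IsChain.imp_last {α : Type*} {R : α → α → Prop} {l : List α} {x y : α}
    (h : (l ++ [x]).IsChain R) (hxy : ∀ p, R p x → R p y) : (l ++ [y]).IsChain R :=
  h.left_of_append.append (isChain_singleton y) fun p hp q hq => by
    obtain rfl : q = y := by simpa using hq.symm
    exact hxy p ((isChain_append.1 h).2.2 p hp x rfl)

theorem IsSubnormal.subgroup_isSubnormal {G : Type*} [Group G] {N : Subgroup G}
    (hN : IsSubnormal N) : N.IsSubnormal := by
  obtain ⟨k, s, rfl, hsk, hs⟩ := hN
  induction k generalizing s with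
  | zero => exact hsk ▸ .top
  | succ k ih =>
    exact .step _ _ (hs 0 k.succ_pos).1
      (ih (fun i => s (i + 1)) hsk fun i hi => hs (i + 1) (by omega)) (hs 0 k.succ_pos).2

namespace Subgroup.IsSubnormal

variable {G : Type*} [Group G] {H K : Subgroup G}

theorem exists_conj_mem_of_le_of_ne_top (hH : H.IsSubnormal) (hHK : H ≤ K) (hK : K ≠ ⊤) :
    ∃ m ∉ K, ∀ h ∈ H, m * h * m⁻¹ ∈ K := by
  induction hH with
  | top => exact absurd (top_le_iff.1 hHK) hK
  | step H L hHL _ hnormal ih =>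
    by_cases hLK : L ≤ K
    · obtain ⟨m, hm, hmL⟩ := ih hLK
      exact ⟨m, hm, fun h hh => hmL h (hHL hh)⟩
    · obtain ⟨m, hmL, hm⟩ := SetLike.not_le_iff_exists.1 hLK
      refine ⟨m, hm, fun h hh => hHK ?_⟩
      have := hnormal.conj_mem ⟨h, hHL hh⟩ (mem_subgroupOf.2 hh) ⟨m, hmL⟩
      simpa [mem_subgroupOf] using this

end Subgroup.IsSubnormal

namespace HNNExtension

open NormalWord

variable {G : Type*} [Group G] {A B : Subgroup G} {φ : A ≃* B}

theorem ReducedWord.exists_prod_eq (m : HNNExtension G A B φ) :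
    ∃ w : ReducedWord G A B, w.prod φ = m := by
  obtain ⟨d⟩ := TransversalPair.nonempty G A B
  exact ⟨(m • (NormalWord.empty : NormalWord d)).toReducedWord, by simp [prod_smul]⟩

theorem t_notMem_range : (t : HNNExtension G A B φ) ∉ (of : G →* HNNExtension G A B φ).range := by
  intro ht
  have := ReducedWord.toList_eq_nil_of_mem_of_range φ
    ⟨1, [(1, 1)], List.isChain_singleton _⟩ (by simpa [ReducedWord.prod] using ht)
  simp at this

theorem of_range_ne_top : (of : G →* HNNExtension G A B φ).range ≠ ⊤ :=
  fun h => t_notMem_range (h ▸ Subgroup.mem_top t)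

theorem exists_conj_mem_toSubgroup_of_of_mul_eq_mul_of {m : HNNExtension G A B φ}
    (hm : m ∉ (of : G →* HNNExtension G A B φ).range) :
    ∃ (g : G) (u : ℤˣ), ∀ a b : G, of a * m = m * of b → g⁻¹ * a * g ∈ toSubgroup A B u := by
  obtain ⟨⟨g, L, hL⟩, rfl⟩ := ReducedWord.exists_prod_eq (φ := φ) m
  obtain rfl | ⟨l, x, rfl⟩ := L.eq_nil_or_concat'
  · exact absurd ⟨g, by simp [ReducedWord.prod]⟩ hm
  refine ⟨g, -((l ++ [x]).head (by simp)).1, fun a b hab => ?_⟩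
  let w₁ : ReducedWord G A B := ⟨a * g, l ++ [x], hL⟩
  let w₂ : ReducedWord G A B := ⟨g, l ++ [(x.1, x.2 * b)], hL.imp_last fun _ => id⟩
  have hprod : w₁.prod φ = w₂.prod φ := by
    simpa [w₁, w₂, ReducedWord.prod, List.prod_append, mul_assoc] using hab
  have hhead := (ReducedWord.map_fst_eq_and_of_prod_eq φ hprod).2
    ((l ++ [x]).head (by simp)).1 (by simp [w₁, List.head?_eq_some_head])
  simpa [w₁, mul_assoc] using inv_mem hhead

theorem exists_conj_mem_map_of_of_mem_toSubgroup (u : ℤˣ) :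
    ∃ g : HNNExtension G A B φ, ∀ a ∈ toSubgroup A B u, g * of a * g⁻¹ ∈ A.map of := by
  rcases Int.units_eq_one_or u with rfl | rfl
  · exact ⟨1, fun a ha => by simpa using ⟨a, ha, rfl⟩⟩
  · refine ⟨t⁻¹, fun a ha => ⟨φ.symm ⟨a, ha⟩, (φ.symm _).2, ?_⟩⟩
    rw [equiv_symm_eq_conj, inv_inv]

theorem exists_conj_mem_map_of_of_notMem_range {m : HNNExtension G A B φ}
    (hm : m ∉ (of : G →* HNNExtension G A B φ).range) :
    ∃ g : HNNExtension G A B φ, ∀ a : G,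
      m * of a * m⁻¹ ∈ (of : G →* HNNExtension G A B φ).range → g * of a * g⁻¹ ∈ A.map of := by
  obtain ⟨g₀, u, hg₀⟩ :=
    exists_conj_mem_toSubgroup_of_of_mul_eq_mul_of (inv_mem_iff.not.2 hm)
  obtain ⟨g₁, hg₁⟩ := exists_conj_mem_map_of_of_mem_toSubgroup (φ := φ) u
  refine ⟨g₁ * of g₀⁻¹, fun a ⟨b, hb⟩ => ?_⟩
  simpa [mul_assoc] using hg₁ _ (hg₀ a b (by rw [hb]; group))

end HNNExtension

/-- **Elkalla's Lemma 2.4, HNN case.** Let `G` be the HNN extension of `A` with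
associated subgroups `C`, `C'` along an isomorphism `φ : C ≃* C'` (so the stable
letter `t` satisfies `t c t⁻¹ = φ(c)` for `c ∈ C`). If `N` is a subgroup of the
canonical image of `A` which is subnormal in `G`, then some conjugate of `N`
lies in the image of `C`. -/
theorem subnormal_subgroup_of_base_conjugate_into_assoc_subgroup
    {A : Type*} [Group A] (C C' : Subgroup A) (φ : C ≃* C')
    (N : Subgroup (HNNExtension A C C' φ))
    (hNA : N ≤ (HNNExtension.of : A →* HNNExtension A C C' φ).range)
    (hsub : IsSubnormal N) :
    ∃ g : HNNExtension A C C' φ,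
      N.map (MulAut.conj g).toMonoidHom ≤
        C.map (HNNExtension.of : A →* HNNExtension A C C' φ) := by
  obtain ⟨m, hm, hmN⟩ :=
    hsub.subgroup_isSubnormal.exists_conj_mem_of_le_of_ne_top hNA HNNExtension.of_range_ne_top
  obtain ⟨g, hg⟩ := HNNExtension.exists_conj_mem_map_of_of_notMem_range hm
  refine ⟨g, ?_⟩
  rintro _ ⟨n, hn, rfl⟩
  obtain ⟨a, rfl⟩ := hNA hn
  exact hg a (hmN _ hn)
end

section
/- Let θ be the automorphism of ℤ² given by θ(a,b) = (-b, a-b) (so θ sends x = (1,0) to y = (0,1) and y to -x - y, and θ³ = id), and let G = ℤ² ⋊_θ ℤ be the corresponding semidirect product, with t denoting the generator (0,0;1) of the ℤ factor and x the element ((1,0);0). Let U be the subgroup of G generated by x and t³. Then: the normalizer N_G(U) has index 3 in G; the quotient N_G(U)/U is infinite cyclic; and the normal core Core_G(U) is the infinite cyclic subgroup generated by t³, which has infinite index in U. -/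
/-- The additive automorphism `θ` of `ℤ²` with `θ(a,b) = (-b, a-b)`,
sending `x = (1,0)` to `y = (0,1)` and `y` to `-x - y`; it has order 3. -/
def thetaAdd : (ℤ × ℤ) ≃+ (ℤ × ℤ) where
  toFun p := (-p.2, p.1 - p.2)
  invFun p := (p.2 - p.1, -p.1)
  left_inv := by rintro ⟨a, b⟩; simp [Prod.ext_iff]
  right_inv := by rintro ⟨a, b⟩; simp [Prod.ext_iff]
  map_add' := by rintro ⟨a, b⟩ ⟨c, d⟩; simp [Prod.ext_iff]; ring_nf; simp [add_comm, add_left_comm, sub_eq_add_neg]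

/-- `θ` as a multiplicative automorphism of `Multiplicative (ℤ × ℤ)`. -/
def theta : MulAut (Multiplicative (ℤ × ℤ)) :=
  AddEquiv.toMultiplicative thetaAdd

/-- The action `φ : ℤ → Aut(ℤ²)` sending the generator `t` of `ℤ` to `θ`. -/
def phi : Multiplicative ℤ →* MulAut (Multiplicative (ℤ × ℤ)) :=
  zpowersHom (MulAut (Multiplicative (ℤ × ℤ))) theta

/-- The group `G = ℤ² ⋊_θ ℤ`, i.e. `⟨t, x, y ∣ txt⁻¹ = y, tyt⁻¹ = x⁻¹y⁻¹, xy = yx⟩`. -/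
abbrev GThree : Type := Multiplicative (ℤ × ℤ) ⋊[phi] Multiplicative ℤ

/-- The stable generator `t` of the `ℤ` factor. -/
def tG : GThree := SemidirectProduct.inr (Multiplicative.ofAdd 1)

/-- The element `x = ((1,0); 0)`. -/
def xG : GThree := SemidirectProduct.inl (Multiplicative.ofAdd ((1 : ℤ), (0 : ℤ)))

/-! Since `θ` has order 3, `φ` is trivial exactly on `3ℤ`, and the preimage `K = ℤ² ⋊ 3ℤ` of
`ker φ` is the abelian group `ℤ² × 3ℤ`; concretely `U = (ℤ × 0) × 3ℤ ≤ K`. Being abelian, `K`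
normalizes `U`, and nothing else does, because conjugating `x` by `t` or `t²` gives `y` or
`x⁻¹y⁻¹ ∉ U`. Hence `N_G(U) = K` has index 3 and `N_G(U)/U ≅ ℤ²/(ℤ × 0) ≅ ℤ`. The element `t³` is
central, so `⟨t³⟩ ≤ Core_G(U)`; conversely conjugation by `t` sends `((a,0); 3k) ∈ U` to
`((0,a); 3k)`, which lies in `U` only if `a = 0`. Finally `U/⟨t³⟩ ≅ ℤ` through the first
coordinate. -/

namespace SemidirectProduct

section
variable {N G : Type*} [Group N] [Group G] {φ : G →* MulAut N}

def untwisted (φ : G →* MulAut N) : Subgroup (N ⋊[φ] G) := φ.ker.comap rightHom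

theorem mem_untwisted {g : N ⋊[φ] G} : g ∈ untwisted φ ↔ φ g.right = 1 := Iff.rfl

theorem left_mul_of_mem_untwisted {g : N ⋊[φ] G} (hg : g ∈ untwisted φ) (h : N ⋊[φ] G) :
    (g * h).left = g.left * h.left := by
  rw [mul_left, mem_untwisted.mp hg, MulAut.one_apply]

def untwistedLeft (φ : G →* MulAut N) : untwisted φ →* N where
  toFun g := (g : N ⋊[φ] G).left
  map_one' := rfl
  map_mul' g h := left_mul_of_mem_untwisted g.2 h

theorem index_untwisted : (untwisted φ).index = Nat.card φ.range := by
  rw [untwisted, Subgroup.index_comap_of_surjective _ rightHom_surjective, Subgroup.index_ker]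

theorem mem_map_inr {H : Subgroup G} {g : N ⋊[φ] G} :
    g ∈ H.map inr ↔ g.left = 1 ∧ g.right ∈ H := by
  constructor
  · rintro ⟨b, hb, rfl⟩
    exact ⟨rfl, hb⟩
  · rintro ⟨hl, hr⟩
    exact ⟨g.right, hr, by ext <;> simp [hl]⟩

theorem left_inr_mul_mul_inv (b : G) (g : N ⋊[φ] G) :
    (inr b * g * (inr b)⁻¹).left = φ b g.left := by
  simp

end

theorem left_mul_inl_mul_inv {N G : Type*} [CommGroup N] [Group G] {φ : G →* MulAut N}
    (g : N ⋊[φ] G) (n : N) : (g * inl n * g⁻¹).left = φ g.right n := by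
  simp [mul_left, inv_left, mul_comm]

theorem inr_mem_center {N G : Type*} [Group N] [CommGroup G] {φ : G →* MulAut N}
    {b : G} (hb : φ b = 1) : inr b ∈ Subgroup.center (N ⋊[φ] G) := by
  rw [Subgroup.mem_center_iff]
  intro g
  ext <;> simp [hb, mul_comm]

theorem commute_of_mem_untwisted {N G : Type*} [CommGroup N] [CommGroup G]
    {φ : G →* MulAut N} {g h : N ⋊[φ] G} (hg : g ∈ untwisted φ) (hh : h ∈ untwisted φ) :
    Commute g h := by
  ext
  · rw [left_mul_of_mem_untwisted hg, left_mul_of_mem_untwisted hh, mul_comm]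
  · exact mul_comm _ _

theorem untwisted_le_normalizer {N G : Type*} [CommGroup N] [CommGroup G] {φ : G →* MulAut N}
    {U : Subgroup (N ⋊[φ] G)} (hU : U ≤ untwisted φ) :
    untwisted φ ≤ Subgroup.normalizer (U : Set (N ⋊[φ] G)) := by
  have : (U.subgroupOf (untwisted φ)).Normal := ⟨fun u hu g => by
    have hgu : g * u = u * g := Subtype.ext (commute_of_mem_untwisted g.2 u.2).eq
    rwa [hgu, mul_inv_cancel_right]⟩
  exact Subgroup.le_normalizer_of_normal_subgroupOf hU

end SemidirectProduct

open Multiplicative SemidirectProduct Subgroup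

theorem theta_apply (v : Multiplicative (ℤ × ℤ)) :
    theta v = ofAdd (-(toAdd v).2, (toAdd v).1 - (toAdd v).2) := rfl

theorem orderOf_theta : orderOf theta = 3 := by
  apply orderOf_eq_prime
  · ext v : 1
    simp only [pow_succ, pow_zero, one_mul, MulAut.mul_apply, theta_apply, toAdd_ofAdd]
    ext <;> simp
    ring
  · intro h
    have := DFunLike.congr_fun h (ofAdd (1, 0))
    simp [theta_apply] at this

theorem phi_apply (n : Multiplicative ℤ) : phi n = theta ^ toAdd n := rfl

theorem mem_ker_phi {n : Multiplicative ℤ} : n ∈ phi.ker ↔ (3 : ℤ) ∣ toAdd n := by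
  rw [MonoidHom.mem_ker, phi_apply, ← orderOf_dvd_iff_zpow_eq_one, orderOf_theta, Nat.cast_ofNat]

theorem ker_phi : phi.ker = zpowers (ofAdd 3) := by
  ext n
  rw [mem_ker_phi, mem_zpowers_iff]
  constructor
  · rintro ⟨k, hk⟩
    exact ⟨k, by rw [← ofAdd_zsmul, smul_eq_mul, mul_comm, ← hk, ofAdd_toAdd]⟩
  · rintro ⟨k, rfl⟩
    exact ⟨k, by rw [toAdd_zpow, toAdd_ofAdd, smul_eq_mul, mul_comm]⟩

theorem phi_eq_one_of_snd_apply_eq_zero {n : Multiplicative ℤ}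
    (h : (toAdd (phi n (ofAdd (1, 0)))).2 = 0) : phi n = 1 := by
  rw [phi_apply, ← zpow_mod_orderOf, orderOf_theta, Nat.cast_ofNat] at h ⊢
  rcases (by omega : toAdd n % 3 = 0 ∨ toAdd n % 3 = 1 ∨ toAdd n % 3 = 2) with h0 | h1 | h2
  · rw [h0, zpow_zero]
  · rw [h1] at h
    simp [theta_apply] at h
  · rw [h2] at h
    simp [pow_two, theta_apply] at h

theorem tG_pow_three : tG ^ 3 = inr (ofAdd 3) := by
  rw [tG, ← map_pow, ← ofAdd_nsmul, nsmul_eq_mul, mul_one, Nat.cast_ofNat]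

theorem zpowers_tG_pow_three : zpowers (tG ^ 3) = phi.ker.map inr := by
  rw [ker_phi, MonoidHom.map_zpowers, tG_pow_three]

theorem mem_zpowers_tG_pow_three {g : GThree} :
    g ∈ zpowers (tG ^ 3) ↔ g.left = 1 ∧ g ∈ untwisted phi := by
  rw [zpowers_tG_pow_three, mem_map_inr]
  rfl

theorem tG_pow_three_mem_center : tG ^ 3 ∈ center GThree := by
  rw [tG_pow_three]
  exact inr_mem_center (mem_ker_phi.mpr (dvd_refl _))

def subgroupXT3 : Subgroup GThree where
  carrier := {g | g ∈ untwisted phi ∧ (toAdd g.left).2 = 0}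
  one_mem' := ⟨one_mem _, rfl⟩
  mul_mem' := by
    rintro a b ⟨ha, ha2⟩ ⟨hb, hb2⟩
    refine ⟨mul_mem ha hb, ?_⟩
    rw [left_mul_of_mem_untwisted ha, toAdd_mul, Prod.snd_add, ha2, hb2, add_zero]
  inv_mem' := by
    rintro a ⟨ha, ha2⟩
    refine ⟨inv_mem ha, ?_⟩
    simp [inv_left, mem_untwisted.mp ha, ha2]

theorem mem_subgroupXT3 {g : GThree} :
    g ∈ subgroupXT3 ↔ g ∈ untwisted phi ∧ (toAdd g.left).2 = 0 := Iff.rfl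

theorem subgroupXT3_le_untwisted : subgroupXT3 ≤ untwisted phi := fun _ hg => hg.1

theorem xG_mem_subgroupXT3 : xG ∈ subgroupXT3 := ⟨map_one phi, rfl⟩

theorem tG_pow_three_mem_subgroupXT3 : tG ^ 3 ∈ subgroupXT3 :=
  ⟨mem_ker_phi.mpr ⟨1, rfl⟩, by rw [tG_pow_three]; rfl⟩

theorem closure_xG_tG_pow_three : closure {xG, tG ^ 3} = subgroupXT3 := by
  apply le_antisymm
  · rw [closure_le, Set.insert_subset_iff, Set.singleton_subset_iff]
    exact ⟨xG_mem_subgroupXT3, tG_pow_three_mem_subgroupXT3⟩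
  · rintro g ⟨hg, hsnd⟩
    rw [← inl_left_mul_inr_right g]
    refine mul_mem ?_ ?_
    · have hx : inl g.left = xG ^ (toAdd g.left).1 := by
        rw [xG, ← map_zpow, ← ofAdd_zsmul]
        congr
        ext <;> simp [hsnd]
      exact hx ▸ zpow_mem (subset_closure (by simp)) _
    · have ht : inr g.right ∈ zpowers (tG ^ 3) := mem_zpowers_tG_pow_three.mpr ⟨rfl, hg⟩
      exact zpowers_le.mpr (subset_closure (by simp)) ht

theorem normalizer_subgroupXT3 : normalizer (subgroupXT3 : Set GThree) = untwisted phi := by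
  refine le_antisymm (fun g hg => ?_) (untwisted_le_normalizer subgroupXT3_le_untwisted)
  have hx : g * xG * g⁻¹ ∈ subgroupXT3 := (mem_normalizer_iff.mp hg xG).mp xG_mem_subgroupXT3
  rw [mem_subgroupXT3, xG, left_mul_inl_mul_inv] at hx
  exact phi_eq_one_of_snd_apply_eq_zero hx.2

theorem index_untwisted_phi : (untwisted phi).index = 3 := by
  rw [index_untwisted, phi, range_zpowersHom, Nat.card_zpowers, orderOf_theta]

def normalizerSnd : normalizer (subgroupXT3 : Set GThree) →* Multiplicative ℤ :=
  (AddMonoidHom.snd ℤ ℤ).toMultiplicative.comp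
    ((untwistedLeft phi).comp (inclusion normalizer_subgroupXT3.le))

theorem normalizerSnd_surjective : Function.Surjective normalizerSnd := fun b =>
  ⟨⟨inl (ofAdd (0, toAdd b)), normalizer_subgroupXT3.ge (map_one phi)⟩, rfl⟩

theorem ker_normalizerSnd :
    normalizerSnd.ker = subgroupXT3.subgroupOf (normalizer (subgroupXT3 : Set GThree)) := by
  ext g
  exact ⟨fun h => ⟨normalizer_subgroupXT3.le g.2, h⟩, fun h => h.2⟩

theorem normalizer_quotient_subgroupXT3 :
    Nonempty (normalizer (subgroupXT3 : Set GThree) ⧸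
      subgroupXT3.subgroupOf (normalizer (subgroupXT3 : Set GThree)) ≃* Multiplicative ℤ) :=
  ⟨(QuotientGroup.quotientMulEquivOfEq ker_normalizerSnd.symm).trans
    (QuotientGroup.quotientKerEquivOfSurjective _ normalizerSnd_surjective)⟩

theorem normalCore_subgroupXT3 : subgroupXT3.normalCore = zpowers (tG ^ 3) := by
  apply le_antisymm
  · intro g hg
    obtain ⟨hker, hsnd⟩ := subgroupXT3.normalCore_le hg
    have hfst : (toAdd g.left).1 = 0 := by
      have := (hg tG).2
      rw [tG, left_inr_mul_mul_inv, phi_apply, toAdd_ofAdd, zpow_one, theta_apply] at this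
      simpa [hsnd] using this
    refine mem_zpowers_tG_pow_three.mpr ⟨?_, hker⟩
    rw [← toAdd_eq_zero]
    exact Prod.ext hfst hsnd
  · rw [zpowers_le]
    intro b
    rw [mem_center_iff.mp tG_pow_three_mem_center b, mul_inv_cancel_right]
    exact tG_pow_three_mem_subgroupXT3

def subgroupXT3Fst : subgroupXT3 →* Multiplicative ℤ :=
  (AddMonoidHom.fst ℤ ℤ).toMultiplicative.comp
    ((untwistedLeft phi).comp (inclusion subgroupXT3_le_untwisted))

theorem subgroupXT3Fst_surjective : Function.Surjective subgroupXT3Fst := fun b =>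
  ⟨⟨inl (ofAdd (toAdd b, 0)), map_one phi, rfl⟩, rfl⟩

theorem ker_subgroupXT3Fst : subgroupXT3Fst.ker = (zpowers (tG ^ 3)).subgroupOf subgroupXT3 := by
  ext ⟨g, hg, hsnd⟩
  rw [mem_subgroupOf, mem_zpowers_tG_pow_three, MonoidHom.mem_ker]
  change ofAdd (toAdd g.left).1 = 1 ↔ g.left = 1 ∧ g ∈ untwisted phi
  rw [ofAdd_eq_one, ← toAdd_eq_zero, Prod.ext_iff]
  simp [hg, hsnd]

theorem relIndex_zpowers_tG_pow_three : (zpowers (tG ^ 3)).relIndex subgroupXT3 = 0 := by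
  rw [relIndex, ← ker_subgroupXT3Fst, index_ker,
    MonoidHom.range_eq_top.mpr subgroupXT3Fst_surjective, card_top, Nat.card_eq_zero_of_infinite]

/-- In `G = ℤ² ⋊_θ ℤ` with `U = ⟨x, t³⟩`: the normalizer `N_G(U)` has index 3 in
`G`, the quotient `N_G(U)/U` is infinite cyclic, and the normal core of `U` in
`G` is the infinite cyclic subgroup generated by `t³`, of infinite index in `U`. -/
theorem gthree_counterexample
    (U : Subgroup GThree) (hU : U = Subgroup.closure {xG, tG ^ 3}) :
    (Subgroup.normalizer (U : Set GThree)).index = 3 ∧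
    Nonempty ((Subgroup.normalizer (U : Set GThree) ⧸ U.subgroupOf (Subgroup.normalizer (U : Set GThree))) ≃* Multiplicative ℤ) ∧
    U.normalCore = Subgroup.zpowers (tG ^ 3) ∧
    U.normalCore.relIndex U = 0 := by
  rw [hU, closure_xG_tG_pow_three, normalCore_subgroupXT3]
  exact ⟨normalizer_subgroupXT3 ▸ index_untwisted_phi, normalizer_quotient_subgroupXT3, rfl,
    relIndex_zpowers_tG_pow_three⟩
end
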